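/- arXiv:2305.09040 — 2 statements merged into one kernel-verified Lean document; each statement's English description precedes it below -/
import Mathlib

section
/- Fix p > 1 and let a be the sequence defined in the context. Then there exists a constant C > 0 such that for every integer n ≥ 1: (Σ_{k=n}^{2n−1} |a_k − a_{k+3}|^p)^{1/p} ≤ (C/n) · Σ_{k=n}^{2n} a_k. -/
noncomputable section

/-- The sequence from the counterexample: `a_n = 3/(n ln(n+1))` if `n ≡ 1 (mod 3)`;
`a_n = 1/((n−3) ln(n−2)) + 1/(n^{1+1/p} ln(n+1))` if `n ≡ 0 (mod 6)`;
`a_n = 1/(n ln(n+1))` otherwise. -/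
noncomputable def aseq (p : ℝ) (n : ℕ) : ℝ :=
  if n % 3 = 1 then 3 / ((n : ℝ) * Real.log ((n : ℝ) + 1))
  else if n % 6 = 0 then
    1 / (((n : ℝ) - 3) * Real.log ((n : ℝ) - 2)) +
      1 / ((n : ℝ) ^ (1 + 1/p) * Real.log ((n : ℝ) + 1))
  else 1 / ((n : ℝ) * Real.log ((n : ℝ) + 1))

private lemma diff_le (x y : ℝ) (hx : 1 ≤ x) (hxy : x ≤ y) :
    0 ≤ 1/(x*Real.log (x+1)) - 1/(y*Real.log (y+1)) ∧
    1/(x*Real.log (x+1)) - 1/(y*Real.log (y+1)) ≤ 3*(y-x) / (x^2 * Real.log (x+1)) := by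
  have hy : 1 ≤ y := hx.trans hxy
  have hx0 : 0 < x := by linarith
  have hy0 : 0 < y := by linarith
  have hu : 0 < Real.log (x+1) := Real.log_pos (by linarith)
  have hv : 0 < Real.log (y+1) := Real.log_pos (by linarith)
  have huv : Real.log (x+1) ≤ Real.log (y+1) := Real.log_le_log (by linarith) (by linarith)
  have h2v : (2/3 : ℝ) < Real.log (y+1) := by
    have h2 : (0.6931471803 : ℝ) < Real.log 2 := Real.log_two_gt_d9
    have : Real.log 2 ≤ Real.log (y+1) := Real.log_le_log (by norm_num) (by linarith)
    linarith
  set u := Real.log (x+1) with hudef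
  set v := Real.log (y+1) with hvdef
  constructor
  · have h1 : 0 < x * u := by positivity
    have h2 : x * u ≤ y * v := mul_le_mul hxy huv hu.le hy0.le
    have := one_div_le_one_div_of_le h1 h2
    linarith
  · have hid : 1/(x*u) - 1/(y*v) = (y-x)/(x*y*u) + (v-u)/(y*u*v) := by
      field_simp
      ring
    have hvu : v - u ≤ (y - x)/x := by
      have hlog : v - u = Real.log ((y+1)/(x+1)) := by
        rw [hudef, hvdef, Real.log_div (by linarith) (by linarith)]
      have h3 : Real.log ((y+1)/(x+1)) ≤ (y+1)/(x+1) - 1 :=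
        Real.log_le_sub_one_of_pos (by positivity)
      have h4 : (y+1)/(x+1) - 1 ≤ (y-x)/x := by
        rw [div_sub_one (by positivity : (x:ℝ)+1 ≠ 0)]
        apply div_le_div₀ (by linarith) (by linarith) hx0 (by linarith)
      linarith [hlog ▸ h3]
    have t1 : (y-x)/(x*y*u) ≤ (y-x)/(x^2*u) := by
      apply div_le_div_of_nonneg_left (by linarith) (by positivity)
      nlinarith [mul_le_mul_of_nonneg_right (mul_le_mul_of_nonneg_left hxy hx0.le) hu.le]
    have t2 : (v-u)/(y*u*v) ≤ ((y-x)/x)/((2/3)*(x*u)) := by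
      apply div_le_div₀ (div_nonneg (by linarith) hx0.le) hvu (by positivity)
      have hxyu : x * u ≤ y * u := mul_le_mul_of_nonneg_right hxy hu.le
      nlinarith [mul_le_mul hxyu h2v.le (by norm_num) (by positivity : (0:ℝ) ≤ y * u)]
    have t3 : ((y-x)/x)/((2/3)*(x*u)) = (3/2)*(y-x)/(x^2*u) := by
      field_simp
    have hnn : 0 ≤ (y-x)/(x^2*u) := div_nonneg (by linarith) (by positivity)
    have hsplit : 3*(y-x)/(x^2*u) = (y-x)/(x^2*u) + 2*((y-x)/(x^2*u)) := by ring
    rw [hid, hsplit]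
    have : (3/2)*(y-x)/(x^2*u) = (3/2)*((y-x)/(x^2*u)) := by ring
    linarith [t2.trans_eq t3]

set_option maxHeartbeats 1000000 in
private lemma aseq_diff_bound (p : ℝ) (hp : 1 < p) (k : ℕ) (hk : 1 ≤ k) :
    |aseq p k - aseq p (k+3)| ≤ 150 / ((k:ℝ) ^ (1+1/p) * Real.log ((k:ℝ)+1)) := by
  have hK : (1:ℝ) ≤ (k:ℝ) := by exact_mod_cast hk
  have hK0 : (0:ℝ) < (k:ℝ) := by linarith
  have hL : 0 < Real.log ((k:ℝ)+1) := Real.log_pos (by linarith)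
  have hexp0 : (0:ℝ) ≤ 1 + 1/p := by positivity
  have hrp : (0:ℝ) < (k:ℝ) ^ (1+1/p) := Real.rpow_pos_of_pos hK0 _
  have hr2 : (k:ℝ) ^ (1+1/p) ≤ (k:ℝ)^2 := by
    have hexp : 1 + 1/p ≤ 2 := by
      have : 1/p ≤ 1 := by rw [div_le_one (by linarith)]; linarith
      linarith
    calc (k:ℝ) ^ (1+1/p) ≤ (k:ℝ) ^ (2:ℝ) := Real.rpow_le_rpow_of_exponent_le hK hexp
    _ = (k:ℝ)^2 := by rw [show ((2:ℝ)) = ((2:ℕ):ℝ) by norm_num, Real.rpow_natCast]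
  set L := Real.log ((k:ℝ)+1) with hLdef
  have hg0 : (0:ℝ) ≤ 1/((k:ℝ)^(1+1/p) * L) := by positivity
  have hb0 : (0:ℝ) ≤ 1/((k:ℝ)^2 * L) := by positivity
  have hKL2 : (0:ℝ) < (k:ℝ)^2*L := by positivity
  have hKLr : (0:ℝ) < (k:ℝ)^(1+1/p)*L := by positivity
  clear_value L
  suffices h : |aseq p k - aseq p (k+3)| ≤ 149/((k:ℝ)^2 * L) + 1/((k:ℝ)^(1+1/p) * L) by
    refine h.trans ?_
    have h1 : 149/((k:ℝ)^2*L) ≤ 149/((k:ℝ)^(1+1/p)*L) := by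
      apply div_le_div_of_nonneg_left (by norm_num) hKLr
      exact mul_le_mul_of_nonneg_right hr2 hL.le
    have h2 : 149/((k:ℝ)^(1+1/p)*L) + 1/((k:ℝ)^(1+1/p)*L) = 150/((k:ℝ)^(1+1/p)*L) := by
      rw [← add_div]; norm_num
    linarith
  have hLv : 0 < Real.log ((k:ℝ)+3+1) := Real.log_pos (by linarith)
  have h149 : ∀ D : ℝ, D ≤ 27/((k:ℝ)^2*L) → D ≤ 149/((k:ℝ)^2 * L) + 1/((k:ℝ)^(1+1/p) * L) := by
    intro D hD
    have : (27:ℝ)/((k:ℝ)^2*L) ≤ 149/((k:ℝ)^2*L) := (div_le_div_iff_of_pos_right hKL2).mpr (by norm_num)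
    linarith
  have h6 : k % 6 = 0 ∨ k % 6 = 1 ∨ k % 6 = 2 ∨ k % 6 = 3 ∨ k % 6 = 4 ∨ k % 6 = 5 := by omega
  obtain h|h|h|h|h|h := h6
  -- case 0
  · have hk6 : 6 ≤ k := by omega
    have hK6 : (6:ℝ) ≤ (k:ℝ) := by exact_mod_cast hk6
    have hlg2 : 0 < Real.log ((k:ℝ)-2) := Real.log_pos (by linarith)
    have e1 : aseq p k = 1/(((k:ℝ)-3)*Real.log ((k:ℝ)-2)) + 1/((k:ℝ)^(1+1/p)*L) := by
      rw [hLdef, aseq, if_neg (by omega), if_pos (by omega)]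
    have e2 : aseq p (k+3) = 1/(((k:ℝ)+3)*Real.log ((k:ℝ)+3+1)) := by
      rw [aseq, if_neg (by omega), if_neg (by omega)]; push_cast; ring_nf
    obtain ⟨hge, hle⟩ := diff_le ((k:ℝ)-3) ((k:ℝ)+3) (by linarith) (by linarith)
    rw [show (k:ℝ)-3+1 = (k:ℝ)-2 by ring] at hge hle
    rw [e1, e2]
    have hsplit : 1/(((k:ℝ)-3)*Real.log ((k:ℝ)-2)) + 1/((k:ℝ)^(1+1/p)*L)
        - 1/(((k:ℝ)+3)*Real.log ((k:ℝ)+3+1))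
        = (1/(((k:ℝ)-3)*Real.log ((k:ℝ)-2)) - 1/(((k:ℝ)+3)*Real.log ((k:ℝ)+3+1)))
          + 1/((k:ℝ)^(1+1/p)*L) := by ring
    rw [hsplit, abs_of_nonneg (by linarith)]
    have hBbound : 1/(((k:ℝ)-3)*Real.log ((k:ℝ)-2)) - 1/(((k:ℝ)+3)*Real.log ((k:ℝ)+3+1))
        ≤ 149/((k:ℝ)^2*L) := by
      have hb1 : 3*(((k:ℝ)+3)-((k:ℝ)-3))/(((k:ℝ)-3)^2*Real.log ((k:ℝ)-2))
          = 18/(((k:ℝ)-3)^2*Real.log ((k:ℝ)-2)) := by ring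
      rw [hb1] at hle
      have hlg : L ≤ 2*Real.log ((k:ℝ)-2) := by
        have h1 : (k:ℝ)+1 ≤ ((k:ℝ)-2)^2 := by nlinarith
        have h2 : Real.log ((k:ℝ)+1) ≤ Real.log (((k:ℝ)-2)^2) := Real.log_le_log (by linarith) h1
        rw [Real.log_pow] at h2
        push_cast at h2
        rw [hLdef]
        linarith
      have hsq : ((k:ℝ))^2/4 ≤ ((k:ℝ)-3)^2 := by nlinarith
      have hd : (k:ℝ)^2*L/8 ≤ ((k:ℝ)-3)^2*Real.log ((k:ℝ)-2) := by
        have := mul_le_mul hsq hlg hL.le (by positivity)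
        nlinarith
      have h18 : 18/(((k:ℝ)-3)^2*Real.log ((k:ℝ)-2)) ≤ 18/((k:ℝ)^2*L/8) :=
        div_le_div_of_nonneg_left (by norm_num) (by linarith) hd
      have heq : (18:ℝ)/((k:ℝ)^2*L/8) = 144/((k:ℝ)^2*L) := by
        rw [div_div_eq_mul_div, eq_div_iff (ne_of_gt hKL2)]
        field_simp
        ring
      have : (144:ℝ)/((k:ℝ)^2*L) ≤ 149/((k:ℝ)^2*L) := (div_le_div_iff_of_pos_right hKL2).mpr (by norm_num)
      linarith [h18.trans_eq heq]
    linarith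
  -- case 1
  · have e1 : aseq p k = 3/((k:ℝ)*L) := by rw [hLdef, aseq, if_pos (by omega : k % 3 = 1)]
    have e2 : aseq p (k+3) = 3/(((k:ℝ)+3)*Real.log ((k:ℝ)+3+1)) := by
      rw [aseq, if_pos (by omega : (k+3) % 3 = 1)]; push_cast; ring_nf
    obtain ⟨hge, hle⟩ := diff_le (k:ℝ) ((k:ℝ)+3) hK (by linarith)
    rw [← hLdef] at hge hle
    rw [e1, e2]
    have hD : 3/((k:ℝ)*L) - 3/(((k:ℝ)+3)*Real.log ((k:ℝ)+3+1))
        = 3*(1/((k:ℝ)*L) - 1/(((k:ℝ)+3)*Real.log ((k:ℝ)+3+1))) := by ring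
    rw [hD, abs_of_nonneg (by linarith)]
    apply h149
    have hb1 : 3*(((k:ℝ)+3)-(k:ℝ))/((k:ℝ)^2*L) = 9/((k:ℝ)^2*L) := by ring
    rw [hb1] at hle
    have h3le := mul_le_mul_of_nonneg_left hle (by norm_num : (0:ℝ) ≤ 3)
    rw [show (3:ℝ)*(9/((k:ℝ)^2*L)) = 27/((k:ℝ)^2*L) by ring] at h3le
    exact h3le
  -- case 2
  · have e1 : aseq p k = 1/((k:ℝ)*L) := by rw [hLdef, aseq, if_neg (by omega), if_neg (by omega)]
    have e2 : aseq p (k+3) = 1/(((k:ℝ)+3)*Real.log ((k:ℝ)+3+1)) := by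
      rw [aseq, if_neg (by omega), if_neg (by omega)]; push_cast; ring_nf
    obtain ⟨hge, hle⟩ := diff_le (k:ℝ) ((k:ℝ)+3) hK (by linarith)
    rw [← hLdef] at hge hle
    rw [e1, e2, abs_of_nonneg (by linarith)]
    apply h149
    have hb1 : 3*(((k:ℝ)+3)-(k:ℝ))/((k:ℝ)^2*L) = 9/((k:ℝ)^2*L) := by ring
    rw [hb1] at hle
    exact hle.trans ((div_le_div_iff_of_pos_right hKL2).mpr (by norm_num))
  -- case 3
  · have e1 : aseq p k = 1/((k:ℝ)*L) := by rw [hLdef, aseq, if_neg (by omega), if_neg (by omega)]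
    have e2 : aseq p (k+3) = 1/((k:ℝ)*L) + 1/(((k:ℝ)+3)^(1+1/p) * Real.log ((k:ℝ)+3+1)) := by
      rw [hLdef, aseq, if_neg (by omega), if_pos (by omega)]; push_cast; ring_nf
    rw [e1, e2]
    have hD : 1/((k:ℝ)*L) - (1/((k:ℝ)*L) + 1/(((k:ℝ)+3)^(1+1/p) * Real.log ((k:ℝ)+3+1)))
        = -(1/(((k:ℝ)+3)^(1+1/p) * Real.log ((k:ℝ)+3+1))) := by ring
    rw [hD, abs_neg, abs_of_nonneg (by positivity)]
    have hd : (k:ℝ)^(1+1/p)*L ≤ ((k:ℝ)+3)^(1+1/p)*Real.log ((k:ℝ)+3+1) := by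
      rw [hLdef]
      exact mul_le_mul (Real.rpow_le_rpow hK0.le (by linarith) hexp0)
        (Real.log_le_log (by linarith) (by linarith)) (Real.log_nonneg (by linarith))
        (by positivity)
    have := one_div_le_one_div_of_le hKLr hd
    have h149' : (0:ℝ) ≤ 149/((k:ℝ)^2*L) := div_nonneg (by norm_num) hKL2.le
    linarith
  -- case 4
  · have e1 : aseq p k = 3/((k:ℝ)*L) := by rw [hLdef, aseq, if_pos (by omega : k % 3 = 1)]
    have e2 : aseq p (k+3) = 3/(((k:ℝ)+3)*Real.log ((k:ℝ)+3+1)) := by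
      rw [aseq, if_pos (by omega : (k+3) % 3 = 1)]; push_cast; ring_nf
    obtain ⟨hge, hle⟩ := diff_le (k:ℝ) ((k:ℝ)+3) hK (by linarith)
    rw [← hLdef] at hge hle
    rw [e1, e2]
    have hD : 3/((k:ℝ)*L) - 3/(((k:ℝ)+3)*Real.log ((k:ℝ)+3+1))
        = 3*(1/((k:ℝ)*L) - 1/(((k:ℝ)+3)*Real.log ((k:ℝ)+3+1))) := by ring
    rw [hD, abs_of_nonneg (by linarith)]
    apply h149
    have hb1 : 3*(((k:ℝ)+3)-(k:ℝ))/((k:ℝ)^2*L) = 9/((k:ℝ)^2*L) := by ring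
    rw [hb1] at hle
    have h3le := mul_le_mul_of_nonneg_left hle (by norm_num : (0:ℝ) ≤ 3)
    rw [show (3:ℝ)*(9/((k:ℝ)^2*L)) = 27/((k:ℝ)^2*L) by ring] at h3le
    exact h3le
  -- case 5
  · have e1 : aseq p k = 1/((k:ℝ)*L) := by rw [hLdef, aseq, if_neg (by omega), if_neg (by omega)]
    have e2 : aseq p (k+3) = 1/(((k:ℝ)+3)*Real.log ((k:ℝ)+3+1)) := by
      rw [aseq, if_neg (by omega), if_neg (by omega)]; push_cast; ring_nf
    obtain ⟨hge, hle⟩ := diff_le (k:ℝ) ((k:ℝ)+3) hK (by linarith)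
    rw [← hLdef] at hge hle
    rw [e1, e2, abs_of_nonneg (by linarith)]
    apply h149
    have hb1 : 3*(((k:ℝ)+3)-(k:ℝ))/((k:ℝ)^2*L) = 9/((k:ℝ)^2*L) := by ring
    rw [hb1] at hle
    exact hle.trans ((div_le_div_iff_of_pos_right hKL2).mpr (by norm_num))

private lemma aseq_lower (p : ℝ) (k : ℕ) (hk : 1 ≤ k) :
    1 / ((k:ℝ) * Real.log ((k:ℝ)+1)) ≤ aseq p k := by
  have hK : (1:ℝ) ≤ (k:ℝ) := by exact_mod_cast hk
  have hL : 0 < Real.log ((k:ℝ)+1) := Real.log_pos (by linarith)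
  rw [aseq]
  by_cases h1 : k % 3 = 1
  · rw [if_pos h1]
    exact (div_le_div_iff_of_pos_right (mul_pos (by linarith) hL)).mpr (by norm_num)
  · rw [if_neg h1]
    by_cases h2 : k % 6 = 0
    · rw [if_pos h2]
      have hk6 : 6 ≤ k := by omega
      have hK6 : (6:ℝ) ≤ (k:ℝ) := by exact_mod_cast hk6
      have hlg2 : 0 < Real.log ((k:ℝ)-2) := Real.log_pos (by linarith)
      have hd : ((k:ℝ)-3) * Real.log ((k:ℝ)-2) ≤ (k:ℝ) * Real.log ((k:ℝ)+1) :=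
        mul_le_mul (by linarith) (Real.log_le_log (by linarith) (by linarith)) hlg2.le
          (by linarith)
      have h3 := one_div_le_one_div_of_le (by nlinarith) hd
      have hg : 0 ≤ 1/((k:ℝ)^(1+1/p) * Real.log ((k:ℝ)+1)) := by positivity
      linarith
    · rw [if_neg h2]

set_option maxHeartbeats 1000000 in
theorem statement18 (p : ℝ) (hp : 1 < p) :
    ∃ C : ℝ, 0 < C ∧ ∀ n : ℕ, 1 ≤ n →
      (∑ k ∈ Finset.Icc n (2*n-1), |aseq p k - aseq p (k+3)| ^ p) ^ (1/p) ≤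
        C / n * ∑ k ∈ Finset.Icc n (2*n), aseq p k := by
  refine ⟨600, by norm_num, fun n hn => ?_⟩
  have hp0 : 0 < p := by linarith
  have hN : (1:ℝ) ≤ (n:ℝ) := by exact_mod_cast hn
  have hN0 : (0:ℝ) < (n:ℝ) := by linarith
  have hn0 : (n:ℝ) ≠ 0 := ne_of_gt hN0
  have hL : 0 < Real.log ((n:ℝ)+1) := Real.log_pos (by linarith)
  have hl0 : Real.log ((n:ℝ)+1) ≠ 0 := ne_of_gt hL
  have hNr : (0:ℝ) < (n:ℝ)^(1+1/p) := Real.rpow_pos_of_pos hN0 _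
  have hc0 : (0:ℝ) ≤ 150 / ((n:ℝ)^(1+1/p) * Real.log ((n:ℝ)+1)) :=
    div_nonneg (by norm_num) (mul_pos hNr hL).le
  -- pointwise bound on the summands of the LHS
  have hterm : ∀ k ∈ Finset.Icc n (2*n-1), |aseq p k - aseq p (k+3)| ^ p ≤
      (150 / ((n:ℝ)^(1+1/p) * Real.log ((n:ℝ)+1))) ^ p := by
    intro k hkmem
    rw [Finset.mem_Icc] at hkmem
    have hk1 : 1 ≤ k := le_trans hn hkmem.1
    have hK : (1:ℝ) ≤ (k:ℝ) := by exact_mod_cast hk1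
    have hNk : (n:ℝ) ≤ (k:ℝ) := by exact_mod_cast hkmem.1
    have hLk : 0 < Real.log ((k:ℝ)+1) := Real.log_pos (by linarith)
    have h1 := aseq_diff_bound p hp k hk1
    have h2 : 150 / ((k:ℝ)^(1+1/p) * Real.log ((k:ℝ)+1)) ≤
        150 / ((n:ℝ)^(1+1/p) * Real.log ((n:ℝ)+1)) := by
      apply div_le_div_of_nonneg_left (by norm_num) (mul_pos hNr hL)
      exact mul_le_mul (Real.rpow_le_rpow hN0.le hNk (by positivity))
        (Real.log_le_log (by linarith) (by linarith)) (Real.log_nonneg (by linarith))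
        (Real.rpow_nonneg (by linarith) _)
    exact Real.rpow_le_rpow (abs_nonneg _) (h1.trans h2) hp0.le
  have hcard : (Finset.Icc n (2*n-1)).card = n := by
    rw [Nat.card_Icc]; omega
  have hsum : ∑ k ∈ Finset.Icc n (2*n-1), |aseq p k - aseq p (k+3)| ^ p ≤
      (n:ℝ) * (150 / ((n:ℝ)^(1+1/p) * Real.log ((n:ℝ)+1))) ^ p := by
    have := Finset.sum_le_card_nsmul _ _ _ hterm
    rw [hcard, nsmul_eq_mul] at this
    exact this
  have hsumnn : 0 ≤ ∑ k ∈ Finset.Icc n (2*n-1), |aseq p k - aseq p (k+3)| ^ p :=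
    Finset.sum_nonneg fun k _ => Real.rpow_nonneg (abs_nonneg _) _
  have hLHS : (∑ k ∈ Finset.Icc n (2*n-1), |aseq p k - aseq p (k+3)| ^ p) ^ (1/p)
      ≤ 150 / ((n:ℝ) * Real.log ((n:ℝ)+1)) := by
    have h1 : (∑ k ∈ Finset.Icc n (2*n-1), |aseq p k - aseq p (k+3)| ^ p) ^ (1/p) ≤
        ((n:ℝ) * (150 / ((n:ℝ)^(1+1/p) * Real.log ((n:ℝ)+1))) ^ p) ^ (1/p) :=
      Real.rpow_le_rpow hsumnn hsum (by positivity)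
    have h2 : ((n:ℝ) * (150 / ((n:ℝ)^(1+1/p) * Real.log ((n:ℝ)+1))) ^ p) ^ (1/p)
        = (n:ℝ)^((1:ℝ)/p) * (150 / ((n:ℝ)^(1+1/p) * Real.log ((n:ℝ)+1))) := by
      rw [Real.mul_rpow hN0.le (Real.rpow_nonneg hc0 _), ← Real.rpow_mul hc0,
        mul_one_div_cancel (ne_of_gt hp0), Real.rpow_one]
    have hr : (0:ℝ) < (n:ℝ)^((1:ℝ)/p) := Real.rpow_pos_of_pos hN0 _
    have h3 : (n:ℝ)^((1:ℝ)/p) * (150 / ((n:ℝ)^(1+1/p) * Real.log ((n:ℝ)+1)))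
        = 150 / ((n:ℝ) * Real.log ((n:ℝ)+1)) := by
      have hr' : ((n:ℝ))^((1:ℝ)/p) ≠ 0 := ne_of_gt hr
      rw [show (1:ℝ)+1/p = 1+(1:ℝ)/p by norm_num, Real.rpow_add hN0, Real.rpow_one]
      field_simp
    rw [h2, h3] at h1
    exact h1
  -- lower bound for the RHS sum
  have hlow : ∀ k ∈ Finset.Icc n (2*n),
      1/((2*(n:ℝ)) * Real.log (2*(n:ℝ)+1)) ≤ aseq p k := by
    intro k hkmem
    rw [Finset.mem_Icc] at hkmem
    have hk1 : 1 ≤ k := le_trans hn hkmem.1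
    have hK : (1:ℝ) ≤ (k:ℝ) := by exact_mod_cast hk1
    have hk2 : (k:ℝ) ≤ 2*(n:ℝ) := by exact_mod_cast hkmem.2
    refine le_trans ?_ (aseq_lower p k hk1)
    apply div_le_div_of_nonneg_left one_pos.le
      (mul_pos (by linarith) (Real.log_pos (by linarith)))
    exact mul_le_mul hk2 (Real.log_le_log (by linarith) (by linarith))
      (Real.log_nonneg (by linarith)) (by linarith)
  have hcard2 : (Finset.Icc n (2*n)).card = n+1 := by rw [Nat.card_Icc]; omega
  have hsum2 : ((n:ℝ)+1) * (1/((2*(n:ℝ))*Real.log (2*(n:ℝ)+1))) ≤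
      ∑ k ∈ Finset.Icc n (2*n), aseq p k := by
    have := Finset.card_nsmul_le_sum _ _ _ hlow
    rw [hcard2, nsmul_eq_mul] at this
    push_cast at this
    exact this
  have hlog2 : Real.log (2*(n:ℝ)+1) ≤ 2 * Real.log ((n:ℝ)+1) := by
    have h1 : 2*(n:ℝ)+1 ≤ ((n:ℝ)+1)^2 := by nlinarith
    have h2 := Real.log_le_log (by linarith) h1
    rw [Real.log_pow] at h2
    push_cast at h2
    linarith
  have hlogpos : 0 < Real.log (2*(n:ℝ)+1) := Real.log_pos (by linarith)
  have hD0 : 0 < (2*(n:ℝ))*Real.log (2*(n:ℝ)+1) := mul_pos (by linarith) hlogpos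
  have hsum3 : 1/(4*Real.log ((n:ℝ)+1)) ≤ ∑ k ∈ Finset.Icc n (2*n), aseq p k := by
    refine le_trans ?_ hsum2
    have hd : (2*(n:ℝ))*Real.log (2*(n:ℝ)+1) ≤ ((n:ℝ)+1)*(4*Real.log ((n:ℝ)+1)) := by
      nlinarith [mul_le_mul_of_nonneg_left hlog2 (by linarith : (0:ℝ) ≤ 2*(n:ℝ)), hL]
    rw [mul_one_div, div_le_div_iff₀ (mul_pos (by norm_num) hL) hD0]
    linarith
  -- combine
  have hfin : (600:ℝ)/(n:ℝ) * (1/(4*Real.log ((n:ℝ)+1))) = 150/((n:ℝ)*Real.log ((n:ℝ)+1)) := by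
    field_simp
    ring
  have h600 : (0:ℝ) ≤ 600/(n:ℝ) := by positivity
  have hmul := mul_le_mul_of_nonneg_left hsum3 h600
  calc (∑ k ∈ Finset.Icc n (2*n-1), |aseq p k - aseq p (k+3)| ^ p) ^ (1/p)
      ≤ 150 / ((n:ℝ) * Real.log ((n:ℝ)+1)) := hLHS
    _ ≤ 600/(n:ℝ) * ∑ k ∈ Finset.Icc n (2*n), aseq p k := by
        rw [← hfin]
        exact hmul

end
end

section
/- Fix p > 1, let a be the sequence defined in the context, and set c_{jk} = a_j a_k. Then Δ_{33}c_{jk} = (a_j − a_{j+3})(a_k − a_{k+3}) for all j, k ≥ 1, and there exists a constant C > 0 such that for all integers m, n ≥ 1: (Σ_{j=m}^{2m−1} Σ_{k=n}^{2n−1} |Δ_{33}c_{jk}|^p)^{1/p} ≤ (C/(mn)) · Σ_{j=m}^{2m} Σ_{k=n}^{2n} a_j a_k. -/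
noncomputable section

lemma fstep {x : ℝ} (hx : 1 ≤ x) :
    0 ≤ 1/(x * Real.log (x+1)) - 1/((x+3) * Real.log (x+4)) ∧
    1/(x * Real.log (x+1)) - 1/((x+3) * Real.log (x+4)) ≤ 18/(x^2 * Real.log (x+1)) := by
  have hx0 : 0 < x := lt_of_lt_of_le one_pos hx
  have hL1 : 0 < Real.log (x+1) := Real.log_pos (by linarith)
  have hL4 : 0 < Real.log (x+4) := Real.log_pos (by linarith)
  have hL14 : Real.log (x+1) ≤ Real.log (x+4) := Real.log_le_log (by linarith) (by linarith)
  have hD : 0 < x * Real.log (x+1) := by positivity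
  have hD' : 0 < (x+3) * Real.log (x+4) := by positivity
  have hDD' : x * Real.log (x+1) ≤ (x+3) * Real.log (x+4) :=
    mul_le_mul (by linarith) hL14 hL1.le (by linarith)
  constructor
  · have := one_div_le_one_div_of_le hD hDD'
    linarith
  · have hdiff : Real.log (x+4) - Real.log (x+1) ≤ 3/x := by
      have h1 : Real.log (x+4) - Real.log (x+1) = Real.log ((x+4)/(x+1)) := by
        rw [Real.log_div (by linarith) (by linarith)]
      rw [h1]
      have h2 : Real.log ((x+4)/(x+1)) ≤ (x+4)/(x+1) - 1 :=
        Real.log_le_sub_one_of_pos (by positivity)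
      have h3 : (x+4)/(x+1) - 1 ≤ 3/x := by
        rw [div_sub_one (by positivity : (0:ℝ) < x + 1).ne']
        rw [div_le_div_iff₀ (by linarith) hx0]
        ring_nf
        nlinarith
      linarith
    have hL4le : Real.log (x+4) ≤ 3 * Real.log (x+1) := by
      have h1 : Real.log (x+4) ≤ Real.log ((x+1)^3) :=
        Real.log_le_log (by linarith) (by nlinarith [pow_le_pow_left₀ (zero_le_one) hx 3, sq_nonneg x])
      rwa [Real.log_pow, Nat.cast_ofNat] at h1
    have h32 : (3:ℝ) ≤ 5 * Real.log (x+1) := by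
      have := Real.log_two_gt_d9
      have h2 : Real.log 2 ≤ Real.log (x+1) := Real.log_le_log (by norm_num) (by linarith)
      linarith
    have hnum : (x+3) * Real.log (x+4) - x * Real.log (x+1) ≤ 14 * Real.log (x+1) := by
      have hxd : x * (Real.log (x+4) - Real.log (x+1)) ≤ 3 := by
        calc x * (Real.log (x+4) - Real.log (x+1)) ≤ x * (3/x) :=
            mul_le_mul_of_nonneg_left hdiff hx0.le
          _ = 3 := by field_simp
      nlinarith
    rw [div_sub_div _ _ hD.ne' hD'.ne', div_le_div_iff₀ (by positivity) (by positivity)]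
    have hsq : x * Real.log (x+1) * (x * Real.log (x+1)) ≤
        x * Real.log (x+1) * ((x+3) * Real.log (x+4)) :=
      mul_le_mul_of_nonneg_left hDD' hD.le
    nlinarith [mul_le_mul_of_nonneg_right hnum (by positivity : (0:ℝ) ≤ x^2 * Real.log (x+1))]

lemma aseq_lb (p : ℝ) (hp : 1 < p) {n : ℕ} (hn : 1 ≤ n) :
    1 / ((n:ℝ) * Real.log ((n:ℝ)+1)) ≤ aseq p n := by
  have hx : (1:ℝ) ≤ (n:ℝ) := by exact_mod_cast hn
  have hL : 0 < Real.log ((n:ℝ)+1) := Real.log_pos (by linarith)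
  have hD : 0 < (n:ℝ) * Real.log ((n:ℝ)+1) := by positivity
  unfold aseq
  split_ifs with h1 h2
  · rw [div_le_div_iff₀ hD hD]; nlinarith
  · have h6 : 6 ≤ n := by omega
    have hx6 : (6:ℝ) ≤ (n:ℝ) := by exact_mod_cast h6
    have hL2 : 0 < Real.log ((n:ℝ)-2) := Real.log_pos (by linarith)
    have hDm : 0 < ((n:ℝ)-3) * Real.log ((n:ℝ)-2) := mul_pos (by linarith) hL2
    have hle : ((n:ℝ)-3) * Real.log ((n:ℝ)-2) ≤ (n:ℝ) * Real.log ((n:ℝ)+1) :=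
      mul_le_mul (by linarith) (Real.log_le_log (by linarith) (by linarith)) hL2.le (by linarith)
    have h1d := one_div_le_one_div_of_le hDm hle
    have hg : 0 < 1 / ((n:ℝ) ^ (1 + 1/p) * Real.log ((n:ℝ)+1)) := by
      have : (0:ℝ) < (n:ℝ) ^ (1 + 1/p) := Real.rpow_pos_of_pos (by linarith) _
      positivity
    linarith
  · exact le_refl _

lemma aseq_pos (p : ℝ) (hp : 1 < p) {n : ℕ} (hn : 1 ≤ n) : 0 < aseq p n := by
  have hx : (1:ℝ) ≤ (n:ℝ) := by exact_mod_cast hn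
  have hL : 0 < Real.log ((n:ℝ)+1) := Real.log_pos (by linarith)
  have : 0 < 1 / ((n:ℝ) * Real.log ((n:ℝ)+1)) := by positivity
  linarith [aseq_lb p hp hn]

set_option maxHeartbeats 1000000 in
lemma aseq_diff (p : ℝ) (hp : 1 < p) {j : ℕ} (hj : 1 ≤ j) :
    |aseq p j - aseq p (j+3)| ≤ 163 / ((j:ℝ)^(1+1/p) * Real.log ((j:ℝ)+1)) := by
  have hx : (1:ℝ) ≤ (j:ℝ) := by exact_mod_cast hj
  have hx0 : (0:ℝ) < (j:ℝ) := by linarith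
  have hL : 0 < Real.log ((j:ℝ)+1) := Real.log_pos (by linarith)
  have hppos : 0 < p := by linarith
  have hinv : 0 < 1/p := by positivity
  have hinv1 : 1/p ≤ 1 := by rw [div_le_one hppos]; linarith
  have hexp : (0:ℝ) < 1 + 1/p := by linarith
  have hpow2 : (j:ℝ)^(1+1/p) ≤ (j:ℝ)^2 := by
    have h := Real.rpow_le_rpow_of_exponent_le hx (show 1+1/p ≤ (2:ℝ) by linarith)
    rwa [show ((2:ℝ)) = ((2:ℕ):ℝ) by norm_num, Real.rpow_natCast] at h
  have hrp_pos : (0:ℝ) < (j:ℝ)^(1+1/p) := Real.rpow_pos_of_pos hx0 _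
  have hden_le : (j:ℝ)^(1+1/p) * Real.log ((j:ℝ)+1) ≤ (j:ℝ)^2 * Real.log ((j:ℝ)+1) :=
    mul_le_mul_of_nonneg_right hpow2 hL.le
  have hden_pos : 0 < (j:ℝ)^(1+1/p) * Real.log ((j:ℝ)+1) := mul_pos hrp_pos hL
  have key : ∀ y : ℝ, |y| ≤ 163/((j:ℝ)^2 * Real.log ((j:ℝ)+1)) →
      |y| ≤ 163/((j:ℝ)^(1+1/p) * Real.log ((j:ℝ)+1)) := fun y hy =>
    hy.trans (div_le_div_of_nonneg_left (by norm_num) hden_pos hden_le)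
  have hmod : j % 6 = 0 ∨ j % 6 = 1 ∨ j % 6 = 2 ∨ j % 6 = 3 ∨ j % 6 = 4 ∨ j % 6 = 5 := by omega
  have case14 : j % 3 = 1 → |aseq p j - aseq p (j+3)| ≤
      163 / ((j:ℝ)^(1+1/p) * Real.log ((j:ℝ)+1)) := by
    intro h
    have ha : aseq p j = 3/((j:ℝ) * Real.log ((j:ℝ)+1)) := by
      unfold aseq; rw [if_pos h]
    have hb : aseq p (j+3) = 3/(((j:ℝ)+3) * Real.log ((j:ℝ)+4)) := by
      unfold aseq; rw [if_pos (by omega)]; push_cast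
      rw [show (j:ℝ)+3+1 = (j:ℝ)+4 by ring]
    obtain ⟨u1, u2⟩ := fstep hx
    apply key
    rw [ha, hb, show 3/((j:ℝ) * Real.log ((j:ℝ)+1)) - 3/(((j:ℝ)+3) * Real.log ((j:ℝ)+4)) =
      3 * (1/((j:ℝ) * Real.log ((j:ℝ)+1)) - 1/(((j:ℝ)+3) * Real.log ((j:ℝ)+4))) by ring,
      abs_of_nonneg (by linarith)]
    have h3 : (3:ℝ) * (18/((j:ℝ)^2 * Real.log ((j:ℝ)+1))) = 54/((j:ℝ)^2 * Real.log ((j:ℝ)+1)) := by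
      ring
    have h54 : (54:ℝ)/((j:ℝ)^2 * Real.log ((j:ℝ)+1)) ≤ 163/((j:ℝ)^2 * Real.log ((j:ℝ)+1)) :=
      (div_le_div_iff_of_pos_right (by positivity)).mpr (by norm_num)
    linarith
  have case25 : j % 3 = 2 → |aseq p j - aseq p (j+3)| ≤
      163 / ((j:ℝ)^(1+1/p) * Real.log ((j:ℝ)+1)) := by
    intro h
    have ha : aseq p j = 1/((j:ℝ) * Real.log ((j:ℝ)+1)) := by
      unfold aseq; rw [if_neg (by omega), if_neg (by omega)]
    have hb : aseq p (j+3) = 1/(((j:ℝ)+3) * Real.log ((j:ℝ)+4)) := by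
      unfold aseq; rw [if_neg (by omega), if_neg (by omega)]; push_cast
      rw [show (j:ℝ)+3+1 = (j:ℝ)+4 by ring]
    obtain ⟨u1, u2⟩ := fstep hx
    apply key
    rw [ha, hb, abs_of_nonneg (by linarith)]
    have h18 : (18:ℝ)/((j:ℝ)^2 * Real.log ((j:ℝ)+1)) ≤ 163/((j:ℝ)^2 * Real.log ((j:ℝ)+1)) :=
      (div_le_div_iff_of_pos_right (by positivity)).mpr (by norm_num)
    linarith
  rcases hmod with h | h | h | h | h | h
  · -- j ≡ 0 mod 6, j ≥ 6
    have h6 : 6 ≤ j := by omega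
    have hx6 : (6:ℝ) ≤ (j:ℝ) := by exact_mod_cast h6
    have ha : aseq p j =
        1/(((j:ℝ)-3) * Real.log ((j:ℝ)-2)) + 1/((j:ℝ)^(1+1/p) * Real.log ((j:ℝ)+1)) := by
      unfold aseq; rw [if_neg (by omega), if_pos h]
    have hb : aseq p (j+3) = 1/(((j:ℝ)+3) * Real.log ((j:ℝ)+4)) := by
      unfold aseq; rw [if_neg (by omega), if_neg (by omega)]; push_cast
      rw [show (j:ℝ)+3+1 = (j:ℝ)+4 by ring]
    obtain ⟨u1, u2⟩ := fstep (show (1:ℝ) ≤ (j:ℝ) - 3 by linarith)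
    rw [show (j:ℝ)-3+1 = (j:ℝ)-2 by ring, show (j:ℝ)-3+3 = (j:ℝ) by ring,
      show (j:ℝ)-3+4 = (j:ℝ)+1 by ring] at u1 u2
    obtain ⟨v1, v2⟩ := fstep hx
    have hg : 0 < 1/((j:ℝ)^(1+1/p) * Real.log ((j:ℝ)+1)) := by positivity
    have hL2 : 0 < Real.log ((j:ℝ)-2) := Real.log_pos (by linarith)
    have hlog2 : Real.log ((j:ℝ)+1) ≤ 2 * Real.log ((j:ℝ)-2) := by
      have h1 : Real.log ((j:ℝ)+1) ≤ Real.log (((j:ℝ)-2)^2) :=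
        Real.log_le_log (by linarith) (by nlinarith)
      rwa [Real.log_pow, Nat.cast_ofNat] at h1
    have hq : (j:ℝ)^2 ≤ 4 * ((j:ℝ)-3)^2 := by nlinarith
    have h144 : 18/(((j:ℝ)-3)^2 * Real.log ((j:ℝ)-2)) ≤ 144/((j:ℝ)^2 * Real.log ((j:ℝ)+1)) := by
      rw [div_le_div_iff₀ (mul_pos (by nlinarith) hL2) (by positivity)]
      nlinarith [mul_le_mul hq hlog2 hL.le (by nlinarith : (0:ℝ) ≤ 4*((j:ℝ)-3)^2)]
    have h162 : 162/((j:ℝ)^2 * Real.log ((j:ℝ)+1)) ≤ 162/((j:ℝ)^(1+1/p) * Real.log ((j:ℝ)+1)) :=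
      div_le_div_of_nonneg_left (by norm_num) hden_pos hden_le
    have hsplit : (163:ℝ)/((j:ℝ)^(1+1/p) * Real.log ((j:ℝ)+1)) =
        162/((j:ℝ)^(1+1/p) * Real.log ((j:ℝ)+1)) + 1/((j:ℝ)^(1+1/p) * Real.log ((j:ℝ)+1)) := by
      ring
    have hadd : 144/((j:ℝ)^2 * Real.log ((j:ℝ)+1)) + 18/((j:ℝ)^2 * Real.log ((j:ℝ)+1)) =
        162/((j:ℝ)^2 * Real.log ((j:ℝ)+1)) := by ring
    rw [ha, hb, abs_of_nonneg (by linarith)]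
    linarith
  · exact case14 (by omega)
  · exact case25 (by omega)
  · -- j ≡ 3 mod 6
    have ha : aseq p j = 1/((j:ℝ) * Real.log ((j:ℝ)+1)) := by
      unfold aseq; rw [if_neg (by omega), if_neg (by omega)]
    have hb : aseq p (j+3) = 1/((j:ℝ) * Real.log ((j:ℝ)+1)) +
        1/(((j:ℝ)+3)^(1+1/p) * Real.log ((j:ℝ)+4)) := by
      unfold aseq; rw [if_neg (by omega), if_pos (by omega)]; push_cast
      rw [show (j:ℝ)+3-3 = (j:ℝ) by ring, show (j:ℝ)+3-2 = (j:ℝ)+1 by ring,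
        show (j:ℝ)+3+1 = (j:ℝ)+4 by ring]
    have hrp3 : (0:ℝ) < ((j:ℝ)+3)^(1+1/p) := Real.rpow_pos_of_pos (by linarith) _
    have hL4 : 0 < Real.log ((j:ℝ)+4) := Real.log_pos (by linarith)
    have hd3 : 0 < ((j:ℝ)+3)^(1+1/p) * Real.log ((j:ℝ)+4) := mul_pos hrp3 hL4
    rw [ha, hb, show 1/((j:ℝ) * Real.log ((j:ℝ)+1)) - (1/((j:ℝ) * Real.log ((j:ℝ)+1)) +
      1/(((j:ℝ)+3)^(1+1/p) * Real.log ((j:ℝ)+4))) =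
      -(1/(((j:ℝ)+3)^(1+1/p) * Real.log ((j:ℝ)+4))) by ring, abs_neg,
      abs_of_nonneg (one_div_nonneg.mpr hd3.le)]
    have hle : (j:ℝ)^(1+1/p) * Real.log ((j:ℝ)+1) ≤ ((j:ℝ)+3)^(1+1/p) * Real.log ((j:ℝ)+4) :=
      mul_le_mul (Real.rpow_le_rpow hx0.le (by linarith) hexp.le)
        (Real.log_le_log (by linarith) (by linarith)) hL.le hrp3.le
    have h1 := one_div_le_one_div_of_le hden_pos hle
    have h163 : (1:ℝ)/((j:ℝ)^(1+1/p) * Real.log ((j:ℝ)+1)) ≤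
        163/((j:ℝ)^(1+1/p) * Real.log ((j:ℝ)+1)) :=
      (div_le_div_iff_of_pos_right hden_pos).mpr (by norm_num)
    linarith
  · exact case14 (by omega)
  · exact case25 (by omega)

lemma sum_lb (p : ℝ) (hp : 1 < p) {m : ℕ} (hm : 1 ≤ m) :
    1 / (4 * Real.log ((m:ℝ)+1)) ≤ ∑ j ∈ Finset.Icc m (2*m), aseq p j := by
  have hm1 : (1:ℝ) ≤ (m:ℝ) := by exact_mod_cast hm
  have hLm : 0 < Real.log ((m:ℝ)+1) := Real.log_pos (by linarith)
  have hL2m : 0 < Real.log (2*(m:ℝ)+1) := Real.log_pos (by linarith)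
  have hstep : ∀ j ∈ Finset.Icc m (2*m),
      1/(2*(m:ℝ) * Real.log (2*(m:ℝ)+1)) ≤ aseq p j := by
    intro j hj
    rw [Finset.mem_Icc] at hj
    have hj1 : 1 ≤ j := le_trans hm hj.1
    have hjr : (j:ℝ) ≤ 2*(m:ℝ) := by
      have : (j:ℝ) ≤ ((2*m : ℕ):ℝ) := by exact_mod_cast hj.2
      push_cast at this; linarith
    have hjr1 : (1:ℝ) ≤ (j:ℝ) := by exact_mod_cast hj1
    have hLj : 0 < Real.log ((j:ℝ)+1) := Real.log_pos (by linarith)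
    refine le_trans ?_ (aseq_lb p hp hj1)
    apply one_div_le_one_div_of_le (by positivity)
    exact mul_le_mul hjr (Real.log_le_log (by linarith) (by linarith)) hLj.le (by linarith)
  have hsum := Finset.card_nsmul_le_sum _ _ _ hstep
  rw [Nat.card_Icc] at hsum
  have hcard : 2*m + 1 - m = m + 1 := by omega
  rw [hcard, nsmul_eq_mul] at hsum
  refine le_trans ?_ hsum
  push_cast
  rw [mul_one_div, div_le_div_iff₀ (by positivity) (by positivity)]
  have hlog2 : Real.log (2*(m:ℝ)+1) ≤ 2 * Real.log ((m:ℝ)+1) := by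
    have h1 : Real.log (2*(m:ℝ)+1) ≤ Real.log (((m:ℝ)+1)^2) :=
      Real.log_le_log (by linarith) (by nlinarith)
    rwa [Real.log_pow, Nat.cast_ofNat] at h1
  nlinarith [mul_le_mul_of_nonneg_left hlog2 (by linarith : (0:ℝ) ≤ 2*(m:ℝ)), hLm, hm1]
lemma oneD (p : ℝ) (hp : 1 < p) {m : ℕ} (hm : 1 ≤ m) :
    (∑ j ∈ Finset.Icc m (2*m-1), |aseq p j - aseq p (j+3)| ^ p) ^ (1/p) ≤
      652/(m:ℝ) * ∑ j ∈ Finset.Icc m (2*m), aseq p j := by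
  have hppos : (0:ℝ) < p := by linarith
  have hm1 : (1:ℝ) ≤ (m:ℝ) := by exact_mod_cast hm
  have hm0 : (0:ℝ) < (m:ℝ) := by linarith
  have hLm : 0 < Real.log ((m:ℝ)+1) := Real.log_pos (by linarith)
  have hrpm : (0:ℝ) < (m:ℝ)^(1+1/p) := Real.rpow_pos_of_pos hm0 _
  set B : ℝ := 163 / ((m:ℝ)^(1+1/p) * Real.log ((m:ℝ)+1)) with hBdef
  have hB0 : 0 ≤ B := by positivity
  have hterm : ∀ j ∈ Finset.Icc m (2*m-1), |aseq p j - aseq p (j+3)| ^ p ≤ B ^ p := by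
    intro j hj
    rw [Finset.mem_Icc] at hj
    have hj1 : 1 ≤ j := le_trans hm hj.1
    have hjm : (m:ℝ) ≤ (j:ℝ) := by exact_mod_cast hj.1
    have hjr1 : (1:ℝ) ≤ (j:ℝ) := by exact_mod_cast hj1
    have hLj : 0 < Real.log ((j:ℝ)+1) := Real.log_pos (by linarith)
    have hrpj : (0:ℝ) < (j:ℝ)^(1+1/p) := Real.rpow_pos_of_pos (by linarith) _
    refine Real.rpow_le_rpow (abs_nonneg _) (le_trans (aseq_diff p hp hj1) ?_) hppos.le
    apply div_le_div_of_nonneg_left (by norm_num) (by positivity)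
    exact mul_le_mul (Real.rpow_le_rpow hm0.le hjm (by positivity))
      (Real.log_le_log (by linarith) (by linarith)) hLm.le hrpj.le
  have hsum := Finset.sum_le_card_nsmul _ _ _ hterm
  rw [Nat.card_Icc] at hsum
  have hcard : 2*m - 1 + 1 - m = m := by omega
  rw [hcard, nsmul_eq_mul] at hsum
  have hXnn : (0:ℝ) ≤ ∑ j ∈ Finset.Icc m (2*m-1), |aseq p j - aseq p (j+3)| ^ p :=
    Finset.sum_nonneg fun _ _ => Real.rpow_nonneg (abs_nonneg _) _
  have h1 : (∑ j ∈ Finset.Icc m (2*m-1), |aseq p j - aseq p (j+3)| ^ p) ^ (1/p) ≤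
      ((m:ℝ) * B ^ p) ^ (1/p) :=
    Real.rpow_le_rpow hXnn hsum (by positivity)
  have h2 : ((m:ℝ) * B ^ p) ^ (1/p) = (m:ℝ)^(1/p) * B := by
    rw [Real.mul_rpow hm0.le (Real.rpow_nonneg hB0 _), ← Real.rpow_mul hB0,
      mul_one_div_cancel hppos.ne', Real.rpow_one]
  have ht : (0:ℝ) < (m:ℝ)^(1/p) := Real.rpow_pos_of_pos hm0 _
  have h3 : (m:ℝ)^(1/p) * B = 163/((m:ℝ) * Real.log ((m:ℝ)+1)) := by
    rw [hBdef, show (m:ℝ)^(1+1/p) = (m:ℝ) * (m:ℝ)^(1/p) by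
      rw [Real.rpow_add hm0, Real.rpow_one]]
    field_simp
  have h4 : (652:ℝ)/(m:ℝ) * (1/(4*Real.log ((m:ℝ)+1))) = 163/((m:ℝ) * Real.log ((m:ℝ)+1)) := by
    field_simp
    ring
  calc (∑ j ∈ Finset.Icc m (2*m-1), |aseq p j - aseq p (j+3)| ^ p) ^ (1/p)
      ≤ ((m:ℝ) * B ^ p) ^ (1/p) := h1
    _ = 163/((m:ℝ) * Real.log ((m:ℝ)+1)) := by rw [h2, h3]
    _ = (652:ℝ)/(m:ℝ) * (1/(4*Real.log ((m:ℝ)+1))) := h4.symm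
    _ ≤ 652/(m:ℝ) * ∑ j ∈ Finset.Icc m (2*m), aseq p j :=
        mul_le_mul_of_nonneg_left (sum_lb p hp hm) (by positivity)

theorem statement19 (p : ℝ) (hp : 1 < p) :
    (∀ j k : ℕ, 1 ≤ j → 1 ≤ k →
      aseq p j * aseq p k - aseq p (j+3) * aseq p k - aseq p j * aseq p (k+3) +
          aseq p (j+3) * aseq p (k+3) =
        (aseq p j - aseq p (j+3)) * (aseq p k - aseq p (k+3))) ∧
    ∃ C : ℝ, 0 < C ∧ ∀ m n : ℕ, 1 ≤ m → 1 ≤ n →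
      (∑ j ∈ Finset.Icc m (2*m-1), ∑ k ∈ Finset.Icc n (2*n-1),
          |aseq p j * aseq p k - aseq p (j+3) * aseq p k - aseq p j * aseq p (k+3) +
              aseq p (j+3) * aseq p (k+3)| ^ p) ^ (1/p) ≤
        C / ((m : ℝ) * n) *
          ∑ j ∈ Finset.Icc m (2*m), ∑ k ∈ Finset.Icc n (2*n), aseq p j * aseq p k := by
  constructor
  · intro j k _ _; ring
  · refine ⟨425104, by norm_num, ?_⟩
    intro m n hm hn
    have hppos : (0:ℝ) < p := by linarith
    have hm0 : (0:ℝ) < (m:ℝ) := by exact_mod_cast hm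
    have hn0 : (0:ℝ) < (n:ℝ) := by exact_mod_cast hn
    have hrw : ∀ j k : ℕ,
        |aseq p j * aseq p k - aseq p (j+3) * aseq p k - aseq p j * aseq p (k+3) +
            aseq p (j+3) * aseq p (k+3)| ^ p =
          |aseq p j - aseq p (j+3)| ^ p * |aseq p k - aseq p (k+3)| ^ p := by
      intro j k
      rw [show aseq p j * aseq p k - aseq p (j+3) * aseq p k - aseq p j * aseq p (k+3) +
          aseq p (j+3) * aseq p (k+3) =
        (aseq p j - aseq p (j+3)) * (aseq p k - aseq p (k+3)) by ring, abs_mul,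
        Real.mul_rpow (abs_nonneg _) (abs_nonneg _)]
    simp only [hrw]
    rw [← Finset.sum_mul_sum, ← Finset.sum_mul_sum]
    have hX0 : (0:ℝ) ≤ ∑ j ∈ Finset.Icc m (2*m-1), |aseq p j - aseq p (j+3)| ^ p :=
      Finset.sum_nonneg fun _ _ => Real.rpow_nonneg (abs_nonneg _) _
    have hY0 : (0:ℝ) ≤ ∑ k ∈ Finset.Icc n (2*n-1), |aseq p k - aseq p (k+3)| ^ p :=
      Finset.sum_nonneg fun _ _ => Real.rpow_nonneg (abs_nonneg _) _
    rw [Real.mul_rpow hX0 hY0]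
    have hSm : (0:ℝ) ≤ ∑ j ∈ Finset.Icc m (2*m), aseq p j :=
      Finset.sum_nonneg fun j hj =>
        (aseq_pos p hp (le_trans hm (Finset.mem_Icc.mp hj).1)).le
    have hSn : (0:ℝ) ≤ ∑ k ∈ Finset.Icc n (2*n), aseq p k :=
      Finset.sum_nonneg fun k hk =>
        (aseq_pos p hp (le_trans hn (Finset.mem_Icc.mp hk).1)).le
    calc (∑ j ∈ Finset.Icc m (2*m-1), |aseq p j - aseq p (j+3)| ^ p) ^ (1/p) *
          (∑ k ∈ Finset.Icc n (2*n-1), |aseq p k - aseq p (k+3)| ^ p) ^ (1/p)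
        ≤ (652/(m:ℝ) * ∑ j ∈ Finset.Icc m (2*m), aseq p j) *
            (652/(n:ℝ) * ∑ k ∈ Finset.Icc n (2*n), aseq p k) := by
          apply mul_le_mul (oneD p hp hm) (oneD p hp hn)
            (Real.rpow_nonneg hY0 _) (by positivity)
      _ = 425104 / ((m:ℝ) * n) *
            ((∑ j ∈ Finset.Icc m (2*m), aseq p j) * ∑ k ∈ Finset.Icc n (2*n), aseq p k) := by
          field_simp
          ring

end
end
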